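/- Let G = G₁ *_H G₂ with [G₁ : H] ≥ 3, [G₂ : H] ≥ 2, and suppose there is a ∈ G₁ ∪ G₂ with HaH ≠ Ha⁻¹H. Then G has infinite width with respect to the conjugation-invariant generating set S = (G₁)^G ∪ (G₂)^G; in particular G has infinite C-width. -/

import Mathlib

/-- A subset `S` of a group is conjugation invariant if it is closed under
conjugation by all elements of the group. -/
def ConjInvariant {G : Type*} [Group G] (S : Set G) : Prop :=
  ∀ g s : G, s ∈ S → g⁻¹ * s * g ∈ S

/-- A group has finite width with respect to `S` if there is `n` such that every
element is a product of at most `n` elements of `S ∪ S⁻¹`. -/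
def HasFiniteWidth {G : Type*} [Group G] (S : Set G) : Prop :=
  ∃ n : ℕ, ∀ g : G, ∃ l : List G, (∀ x ∈ l, x ∈ S ∪ S⁻¹) ∧ l.prod = g ∧ l.length ≤ n

/-- A group has finite `C`-width if it has finite width with respect to every
conjugation invariant generating set. -/
def FiniteCWidth (G : Type*) [Group G] : Prop :=
  ∀ S : Set G, Subgroup.closure S = ⊤ → ConjInvariant S → HasFiniteWidth S

open scoped Pointwise

/-- `x` and `y` lie in different factors. -/
def InDiffFactors {G : Type*} [Group G] (G₁ G₂ : Subgroup G) (x y : G) : Prop :=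
  ¬(x ∈ G₁ ∧ y ∈ G₁) ∧ ¬(x ∈ G₂ ∧ y ∈ G₂)

/-- A reduced word in an (internal) amalgamated free product of `G₁` and `G₂` over `H`. -/
def ReducedWord' {G : Type*} [Group G] (G₁ G₂ H : Subgroup G) (w : List G) : Prop :=
  (∀ x ∈ w, x ∈ (G₁ : Set G) ∪ (G₂ : Set G)) ∧
  w.Chain' (InDiffFactors G₁ G₂) ∧
  (1 < w.length → ∀ x ∈ w, x ∉ H) ∧
  (w.length = 1 → (1 : G) ∉ w)

/-- `G` is the (internal) amalgamated free product `G₁ *_H G₂`: `H = G₁ ⊓ G₂`,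
the factors generate, and nonempty reduced words have nontrivial product. -/
def IsAmalgam {G : Type*} [Group G] (G₁ G₂ H : Subgroup G) : Prop :=
  H = G₁ ⊓ G₂ ∧ Subgroup.closure ((G₁ : Set G) ∪ (G₂ : Set G)) = ⊤ ∧
  ∀ w : List G, ReducedWord' G₁ G₂ H w → w ≠ [] → w.prod ≠ 1

/-- The double coset `H a H`. -/
def DCoset {G : Type*} [Group G] (H : Subgroup G) (a : G) : Set G :=
  (H : Set G) * {a} * (H : Set G)

/-- There is an `a`-segment of length `2k-1` starting at position `j` of the word `w`:
a subword `a x₁ ⋯ x_{2k-1} a` with no `x_i = a`. -/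
def IsSegAt {G : Type*} [Group G] (a : G) (w : List G) (k j : ℕ) : Prop :=
  1 ≤ k ∧ w[j]? = some a ∧ w[j + 2 * k]? = some a ∧
    ∀ i, 0 < i → i < 2 * k → w[j + i]? ≠ some a

/-- `pk a w k` = number of `a`-segments of length `2k-1` in `w`. -/
noncomputable def pk {G : Type*} [Group G] (a : G) (w : List G) (k : ℕ) : ℕ :=
  Set.ncard {j : ℕ | IsSegAt a w k j}

/-- `mk' a w k` = number of `a⁻¹`-segments of length `2k-1` in `w`. -/
noncomputable def mk' {G : Type*} [Group G] (a : G) (w : List G) (k : ℕ) : ℕ :=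
  pk a⁻¹ w k

noncomputable def dk {G : Type*} [Group G] (a : G) (w : List G) (k : ℕ) : ℤ :=
  (pk a w k : ℤ) - (mk' a w k : ℤ)

/-- `rk` is the parity of `dk`. -/
noncomputable def rk {G : Type*} [Group G] (a : G) (w : List G) (k : ℕ) : ℕ :=
  (dk a w k).natAbs % 2

/-- The segment-counting function `f(w) = Σ_k r_k(w)` (all segments have length
at most the length of `w`, so the sum below is the full sum). -/
noncomputable def segf {G : Type*} [Group G] (a : G) (w : List G) : ℕ :=
  ∑ k ∈ Finset.Icc 1 w.length, rk a w k

/-- Data describing the passage from a reduced word `x` to a special form: each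
syllable of the form `u * a^θ * v` with `u v ∈ H` (marked `rep i = true`) is replaced
by `a^θ`, with `u`, `v` absorbed into the neighbouring syllables. -/
structure SpecialData {G : Type*} [Group G] (H : Subgroup G) (a : G) (x : List G) where
  rep : ℕ → Bool
  u : ℕ → G
  v : ℕ → G
  θ : ℕ → ℤ
  hu : ∀ i, u i ∈ H
  hv : ∀ i, v i ∈ H
  hθ : ∀ i, θ i = 1 ∨ θ i = -1
  hrep : ∀ (i : ℕ) (hi : i < x.length), rep i = true → x.get ⟨i, hi⟩ = u i * a ^ θ i * v i
  hnotrep : ∀ i, rep i = false → u i = 1 ∧ v i = 1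
  hforced : ∀ (i : ℕ) (hi : i < x.length),
    (∃ u' ∈ H, ∃ v' ∈ H, ∃ θ' : ℤ, (θ' = 1 ∨ θ' = -1) ∧ x.get ⟨i, hi⟩ = u' * a ^ θ' * v') →
    rep i = true

/-- The special form produced from the reduced word `x` by the data `d`. -/
def SpecialData.word {G : Type*} [Group G] {H : Subgroup G} {a : G} {x : List G}
    (d : SpecialData H a x) : List G :=
  (if x.length ≠ 0 ∧ d.rep 0 = true then [d.u 0] else []) ++
  (List.ofFn fun i : Fin x.length =>
    if d.rep (i : ℕ) = true then a ^ d.θ (i : ℕ)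
    else (if (i : ℕ) = 0 then 1 else d.v ((i : ℕ) - 1)) * x.get i *
      (if (i : ℕ) + 1 < x.length then d.u ((i : ℕ) + 1) else 1)) ++
  (if x.length ≠ 0 ∧ d.rep (x.length - 1) = true then [d.v (x.length - 1)] else [])

/-- `w` is a special form of `g`. -/
def IsSpecialForm {G : Type*} [Group G] (G₁ G₂ H : Subgroup G) (a g : G) (w : List G) : Prop :=
  ∃ (x : List G) (d : SpecialData H a x),
    ReducedWord' G₁ G₂ H x ∧ x.prod = g ∧ w = d.word

/-!
Weight each letter of a reduced word by `+1` if it lies in `HaH`, by `-1` if it lies in `Ha⁻¹H`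
and by `0` otherwise. When two reduced words are multiplied, the letters cancelling at the
junction come in pairs `x`, `x⁻¹` (up to `H`) of opposite weights and at most one merged letter
appears, so the weight is additive up to a bounded error. Applied to `u` and `v⁻¹` for two
reduced forms `u`, `v` of the same element, this shows that the weight `q g` of a reduced form
of `g` is well defined up to a bounded error, and `q` is a quasimorphism. A quasimorphism is
bounded on conjugates of a bounded set, hence on products of boundedly many elements of
`S = (G₁)^G ∪ (G₂)^G`. But for `c` outside `H` in the factor not containing `a` (it exists by the
index assumptions), the reduced word `(a c a c⁻¹)ⁿ a` has weight `2n + 1`, so `q` is unbounded.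
-/

section

variable {G : Type*} [Group G]

def IsQuasimorphism (q : G → ℤ) (D : ℤ) : Prop :=
  ∀ x y, |q (x * y) - q x - q y| ≤ D

namespace IsQuasimorphism

variable {q : G → ℤ} {D : ℤ}

lemma abs_map_one_le (hq : IsQuasimorphism q D) : |q 1| ≤ D := by
  simpa using hq 1 1

lemma abs_map_inv_add_le (hq : IsQuasimorphism q D) (x : G) : |q x⁻¹ + q x| ≤ 2 * D := by
  have h := hq x⁻¹ x
  have h1 := hq.abs_map_one_le
  rw [inv_mul_cancel] at h
  rw [abs_le] at *
  constructor <;> linarith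

lemma abs_map_conj_le (hq : IsQuasimorphism q D) {C : ℤ} {k : G} (hk : |q k| ≤ C) (g : G) :
    |q (g⁻¹ * k * g)| ≤ C + 4 * D := by
  have h1 := hq (g⁻¹ * k) g
  have h2 := hq g⁻¹ k
  have h3 := hq.abs_map_inv_add_le g
  rw [abs_le] at *
  constructor <;> linarith

lemma abs_map_list_prod_le (hq : IsQuasimorphism q D) {C : ℤ} {l : List G}
    (hl : ∀ s ∈ l, |q s| ≤ C) : |q l.prod| ≤ D + l.length * (C + D) := by
  induction l with
  | nil => simpa using hq.abs_map_one_le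
  | cons s l ih =>
    have h1 := hq s l.prod
    have h2 := hl s List.mem_cons_self
    have h3 := ih fun t ht => hl t (List.mem_cons_of_mem s ht)
    rw [List.prod_cons, List.length_cons, Nat.cast_succ, add_one_mul]
    rw [abs_le] at *
    constructor <;> linarith

lemma not_hasFiniteWidth (hq : IsQuasimorphism q D) {S : Set G} {C : ℤ}
    (hS : ∀ s ∈ S, |q s| ≤ C) (hq_unbdd : ¬BddAbove (Set.range q)) : ¬HasFiniteWidth S := by
  rintro ⟨n, hn⟩
  have hD : 0 ≤ D := (abs_nonneg _).trans hq.abs_map_one_le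
  have hS' : ∀ s ∈ S ∪ S⁻¹, |q s| ≤ |C| + 2 * D := by
    rintro s (hs | hs)
    · linarith [hS s hs, le_abs_self C]
    · have h1 := hS _ hs
      have h2 := hq.abs_map_inv_add_le s
      rw [abs_le] at *
      constructor <;> linarith [le_abs_self C, neg_abs_le C]
  refine hq_unbdd ⟨D + n * (|C| + 2 * D + D), ?_⟩
  rintro _ ⟨g, rfl⟩
  obtain ⟨l, hlS, rfl, hlen⟩ := hn g
  calc q l.prod ≤ |q l.prod| := le_abs_self _
    _ ≤ D + l.length * (|C| + 2 * D + D) :=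
      hq.abs_map_list_prod_le fun s hs => hS' s (hlS s hs)
    _ ≤ D + n * (|C| + 2 * D + D) := by gcongr

end IsQuasimorphism

lemma conjInvariant_conjugates (K : Set G) :
    ConjInvariant {x : G | ∃ g k : G, k ∈ K ∧ x = g⁻¹ * k * g} := by
  rintro g _ ⟨g', k, hk, rfl⟩
  exact ⟨g' * g, k, hk, by group⟩

lemma closure_conjugates_eq_top {K : Set G} (hK : Subgroup.closure K = ⊤) :
    Subgroup.closure {x : G | ∃ g k : G, k ∈ K ∧ x = g⁻¹ * k * g} = ⊤ :=
  top_unique <| hK ▸ Subgroup.closure_mono fun k hk => ⟨1, k, hk, by group⟩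

end

section Amalgam

variable {G : Type*} [Group G] {G₁ G₂ H : Subgroup G}

def SameFactors (G₁ G₂ : Subgroup G) (x y : G) : Prop :=
  (x ∈ G₁ ↔ y ∈ G₁) ∧ (x ∈ G₂ ↔ y ∈ G₂)

lemma sameFactors_refl (x : G) : SameFactors G₁ G₂ x x := ⟨Iff.rfl, Iff.rfl⟩

lemma sameFactors_inv (x : G) : SameFactors G₁ G₂ x x⁻¹ :=
  ⟨inv_mem_iff.symm, inv_mem_iff.symm⟩

lemma sameFactors_mul_left (hH : H ≤ G₁ ⊓ G₂) {h : G} (hh : h ∈ H) (x : G) :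
    SameFactors G₁ G₂ x (h * x) :=
  ⟨(G₁.mul_mem_cancel_left (Subgroup.mem_inf.mp (hH hh)).1).symm,
    (G₂.mul_mem_cancel_left (Subgroup.mem_inf.mp (hH hh)).2).symm⟩

lemma sameFactors_of_mem (hH : G₁ ⊓ G₂ ≤ H) {K : Subgroup G} (hK : K = G₁ ∨ K = G₂) {x y : G}
    (hx : x ∈ K) (hy : y ∈ K) (hxH : x ∉ H) (hyH : y ∉ H) : SameFactors G₁ G₂ x y := by
  rcases hK with rfl | rfl
  · exact ⟨iff_of_true hx hy, iff_of_false (fun h => hxH (hH ⟨hx, h⟩))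
      (fun h => hyH (hH ⟨hy, h⟩))⟩
  · exact ⟨iff_of_false (fun h => hxH (hH ⟨h, hx⟩)) (fun h => hyH (hH ⟨h, hy⟩)),
      iff_of_true hx hy⟩

lemma InDiffFactors.symm {x y : G} (h : InDiffFactors G₁ G₂ x y) : InDiffFactors G₁ G₂ y x :=
  ⟨fun h' => h.1 h'.symm, fun h' => h.2 h'.symm⟩

lemma InDiffFactors.congr {x y x' y' : G} (h : InDiffFactors G₁ G₂ x y)
    (hx : SameFactors G₁ G₂ x x') (hy : SameFactors G₁ G₂ y y') : InDiffFactors G₁ G₂ x' y' :=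
  ⟨fun h' => h.1 ⟨hx.1.2 h'.1, hy.1.2 h'.2⟩, fun h' => h.2 ⟨hx.2.2 h'.1, hy.2.2 h'.2⟩⟩

lemma inDiffFactors_of_mem (hH : G₁ ⊓ G₂ ≤ H) {x y : G} (hx : x ∈ G₁) (hy : y ∈ G₂)
    (hxH : x ∉ H) (hyH : y ∉ H) : InDiffFactors G₁ G₂ x y :=
  ⟨fun h => hyH (hH ⟨h.2, hy⟩), fun h => hxH (hH ⟨hx, h.1⟩)⟩

lemma exists_factor_of_not_inDiffFactors {x y : G} (h : ¬InDiffFactors G₁ G₂ x y) :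
    ∃ K : Subgroup G, (K = G₁ ∨ K = G₂) ∧ x ∈ K ∧ y ∈ K := by
  rw [InDiffFactors, not_and_or, not_not, not_not] at h
  rcases h with h | h
  exacts [⟨G₁, .inl rfl, h⟩, ⟨G₂, .inr rfl, h⟩]

def IsLetter (G₁ G₂ H : Subgroup G) (x : G) : Prop :=
  (x ∈ G₁ ∨ x ∈ G₂) ∧ x ∉ H

lemma IsLetter.of_sameFactors {x y : G} (hx : IsLetter G₁ G₂ H x) (hxy : SameFactors G₁ G₂ x y)
    (hy : y ∉ H) : IsLetter G₁ G₂ H y :=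
  ⟨hx.1.imp hxy.1.1 hxy.2.1, hy⟩

lemma IsLetter.inv {x : G} (hx : IsLetter G₁ G₂ H x) : IsLetter G₁ G₂ H x⁻¹ :=
  hx.of_sameFactors (sameFactors_inv x) (inv_mem_iff.not.mpr hx.2)

def IsReducedSeq (G₁ G₂ H : Subgroup G) (w : List G) : Prop :=
  (∀ x ∈ w, IsLetter G₁ G₂ H x) ∧ w.IsChain (InDiffFactors G₁ G₂)

lemma isReducedSeq_nil : IsReducedSeq G₁ G₂ H [] :=
  ⟨by simp, .nil⟩

lemma isReducedSeq_singleton {x : G} : IsReducedSeq G₁ G₂ H [x] ↔ IsLetter G₁ G₂ H x := by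
  simp [IsReducedSeq]

lemma isReducedSeq_append {u v : List G} :
    IsReducedSeq G₁ G₂ H (u ++ v) ↔ IsReducedSeq G₁ G₂ H u ∧ IsReducedSeq G₁ G₂ H v ∧
      ∀ x ∈ u.getLast?, ∀ y ∈ v.head?, InDiffFactors G₁ G₂ x y := by
  simp only [IsReducedSeq, List.mem_append, List.isChain_append, or_imp, forall_and]
  tauto

lemma isReducedSeq_cons {x : G} {w : List G} :
    IsReducedSeq G₁ G₂ H (x :: w) ↔
      IsLetter G₁ G₂ H x ∧ (∀ y ∈ w.head?, InDiffFactors G₁ G₂ x y) ∧ IsReducedSeq G₁ G₂ H w := by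
  rw [← List.singleton_append, isReducedSeq_append, isReducedSeq_singleton]
  simp [and_comm]

lemma isReducedSeq_concat {w : List G} {x : G} :
    IsReducedSeq G₁ G₂ H (w ++ [x]) ↔
      IsReducedSeq G₁ G₂ H w ∧ IsLetter G₁ G₂ H x ∧ ∀ y ∈ w.getLast?, InDiffFactors G₁ G₂ y x := by
  rw [isReducedSeq_append, isReducedSeq_singleton]
  simp

lemma isReducedSeq_cons_cons {x y : G} {w : List G} :
    IsReducedSeq G₁ G₂ H (x :: y :: w) ↔
      IsLetter G₁ G₂ H x ∧ InDiffFactors G₁ G₂ x y ∧ IsReducedSeq G₁ G₂ H (y :: w) := by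
  rw [isReducedSeq_cons]
  simp

lemma IsReducedSeq.cons_of_sameFactors {x y : G} {w : List G}
    (hw : IsReducedSeq G₁ G₂ H (x :: w)) (hxy : SameFactors G₁ G₂ x y) (hy : y ∉ H) :
    IsReducedSeq G₁ G₂ H (y :: w) := by
  obtain ⟨hx, hseam, hw⟩ := isReducedSeq_cons.mp hw
  exact isReducedSeq_cons.mpr ⟨hx.of_sameFactors hxy hy,
    fun z hz => (hseam z hz).congr hxy (sameFactors_refl z), hw⟩

lemma IsReducedSeq.concat_of_sameFactors {x y : G} {w : List G}
    (hw : IsReducedSeq G₁ G₂ H (w ++ [x])) (hxy : SameFactors G₁ G₂ x y) (hy : y ∉ H) :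
    IsReducedSeq G₁ G₂ H (w ++ [y]) := by
  obtain ⟨hw, hx, hseam⟩ := isReducedSeq_concat.mp hw
  exact isReducedSeq_concat.mpr ⟨hw, hx.of_sameFactors hxy hy,
    fun z hz => (hseam z hz).congr (sameFactors_refl z) hxy⟩

lemma IsReducedSeq.glue {u v : List G} {y : G} (hu : IsReducedSeq G₁ G₂ H (u ++ [y]))
    (hv : IsReducedSeq G₁ G₂ H (y :: v)) : IsReducedSeq G₁ G₂ H (u ++ y :: v) := by
  obtain ⟨-, hseam, hv⟩ := isReducedSeq_cons.mp hv
  rw [List.append_cons]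
  exact isReducedSeq_append.mpr ⟨hu, hv, by simpa using hseam⟩

lemma IsReducedSeq.mul_head (hH : H ≤ G₁ ⊓ G₂) {x h : G} {w : List G}
    (hw : IsReducedSeq G₁ G₂ H (x :: w)) (hh : h ∈ H) : IsReducedSeq G₁ G₂ H (h * x :: w) :=
  hw.cons_of_sameFactors (sameFactors_mul_left hH hh x)
    ((H.mul_mem_cancel_left hh).not.mpr (isReducedSeq_cons.mp hw).1.2)

lemma IsReducedSeq.reverse_inv {w : List G} (hw : IsReducedSeq G₁ G₂ H w) :
    IsReducedSeq G₁ G₂ H (w.map (·⁻¹)).reverse := by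
  refine ⟨?_, ?_⟩
  · simp only [List.mem_reverse, List.mem_map]
    rintro _ ⟨x, hx, rfl⟩
    exact (hw.1 x hx).inv
  · rw [List.isChain_reverse, List.isChain_map]
    exact hw.2.imp fun x y h => (h.congr (sameFactors_inv x) (sameFactors_inv y)).symm

lemma IsReducedSeq.reducedWord' {w : List G} (hw : IsReducedSeq G₁ G₂ H w) :
    ReducedWord' G₁ G₂ H w :=
  ⟨fun x hx => (hw.1 x hx).1, hw.2, fun _ x hx => (hw.1 x hx).2,
    fun _ h1 => (hw.1 1 h1).2 H.one_mem⟩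

lemma IsReducedSeq.prod_notMem (ham : IsAmalgam G₁ G₂ H) {w : List G}
    (hw : IsReducedSeq G₁ G₂ H w) (hne : w ≠ []) : w.prod ∉ H := by
  intro hp
  obtain ⟨x, w, rfl⟩ := List.exists_cons_of_ne_nil hne
  refine ham.2.2 _ (hw.mul_head ham.1.le (H.inv_mem hp)).reducedWord' (List.cons_ne_nil _ _) ?_
  rw [List.prod_cons, List.prod_cons, mul_assoc, inv_mul_cancel]

structure IsLetterWeight (H : Subgroup G) (M : ℤ) (χ : G → ℤ) : Prop where
  map_mul_mul : ∀ x, ∀ h₁ ∈ H, ∀ h₂ ∈ H, χ (h₁ * x * h₂) = χ x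
  map_inv : ∀ x, χ x⁻¹ = -χ x
  abs_le : ∀ x, |χ x| ≤ M

namespace IsLetterWeight

variable {M : ℤ} {χ : G → ℤ}

lemma nonneg (hχ : IsLetterWeight H M χ) : 0 ≤ M :=
  (abs_nonneg _).trans (hχ.abs_le 1)

lemma map_mul_left (hχ : IsLetterWeight H M χ) {h : G} (hh : h ∈ H) (x : G) :
    χ (h * x) = χ x := by
  simpa using hχ.map_mul_mul x h hh 1 H.one_mem

lemma map_eq_zero_of_mem (hχ : IsLetterWeight H M χ) {x : G} (hx : x ∈ H) : χ x = 0 := by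
  have h1 : χ 1 = 0 := by
    have := hχ.map_inv 1
    rw [inv_one] at this
    linarith
  simpa [h1] using hχ.map_mul_mul 1 x hx 1 H.one_mem

lemma map_eq_neg_of_mul_mul_mem (hχ : IsLetterWeight H M χ) {x h z : G} (hh : h ∈ H)
    (hxz : x * h * z ∈ H) : χ z = -χ x := by
  rw [← hχ.map_inv, ← hχ.map_mul_mul z h hh (x * h * z)⁻¹ (H.inv_mem hxz)]
  group

end IsLetterWeight

lemma sum_map_reverse_inv {χ : G → ℤ} (hχ : ∀ x, χ x⁻¹ = -χ x) (w : List G) :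
    ((w.map (·⁻¹)).reverse.map χ).sum = -(w.map χ).sum := by
  rw [List.map_reverse, List.sum_reverse, List.map_map]
  induction w with
  | nil => simp
  | cons x w ih => simp [hχ, ih, add_comm]

lemma IsReducedSeq.merge (hH : H = G₁ ⊓ G₂) {u v : List G} {x h z : G}
    (hu : IsReducedSeq G₁ G₂ H (u ++ [x])) (hv : IsReducedSeq G₁ G₂ H (z :: v)) (hh : h ∈ H)
    (hxz : ¬InDiffFactors G₁ G₂ x z) (hy : x * h * z ∉ H) :
    IsReducedSeq G₁ G₂ H (u ++ x * h * z :: v) := by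
  obtain ⟨K, hK, hxK, hzK⟩ := exists_factor_of_not_inDiffFactors hxz
  have hHK : H ≤ K := hH ▸ hK.elim (· ▸ inf_le_left) (· ▸ inf_le_right)
  have hyK : x * h * z ∈ K := K.mul_mem (K.mul_mem hxK (hHK hh)) hzK
  have hx : x ∉ H := (isReducedSeq_concat.mp hu).2.1.2
  have hz : z ∉ H := (isReducedSeq_cons.mp hv).1.2
  exact (hu.concat_of_sameFactors (sameFactors_of_mem hH.ge hK hxK hyK hx hy) hy).glue
    (hv.cons_of_sameFactors (sameFactors_of_mem hH.ge hK hzK hyK hz hy) hy)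

theorem IsReducedSeq.exists_mul (hH : H = G₁ ⊓ G₂) {u v : List G} {h : G}
    (hu : IsReducedSeq G₁ G₂ H u) (hv : IsReducedSeq G₁ G₂ H v) (hh : h ∈ H) :
    ∃ w, ∃ h' ∈ H, IsReducedSeq G₁ G₂ H w ∧ w.prod * h' = u.prod * h * v.prod ∧
      ∀ {M : ℤ} {χ : G → ℤ}, IsLetterWeight H M χ →
        |(w.map χ).sum - (u.map χ).sum - (v.map χ).sum| ≤ 3 * M := by
  induction v generalizing u h with
  | nil => exact ⟨u, h, hh, hu, by simp, fun hχ => by simpa using hχ.nonneg⟩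
  | cons z v ih =>
    have hv' := (isReducedSeq_cons.mp hv).2.2
    rcases u.eq_nil_or_concat' with rfl | ⟨u, x, rfl⟩
    · exact ⟨h * z :: v, 1, H.one_mem, hv.mul_head hH.le hh, by simp [mul_assoc],
        fun hχ => by simpa [hχ.map_mul_left hh] using hχ.nonneg⟩
    have hu' := (isReducedSeq_concat.mp hu).1
    by_cases hxz : InDiffFactors G₁ G₂ x z
    · refine ⟨u ++ [x] ++ h * z :: v, 1, H.one_mem, isReducedSeq_append.mpr
        ⟨hu, hv.mul_head hH.le hh, ?_⟩, by simp [mul_assoc],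
        fun hχ => by simpa [hχ.map_mul_left hh] using hχ.nonneg⟩
      simpa using hxz.congr (sameFactors_refl x) (sameFactors_mul_left hH.le hh z)
    by_cases hy : x * h * z ∈ H
    · obtain ⟨w, h', hh', hw, hprod, hbound⟩ := ih hu' hv' hy
      refine ⟨w, h', hh', hw, by rw [hprod]; simp [mul_assoc], fun {M χ} hχ => ?_⟩
      convert hbound hχ using 2
      simp only [List.map_append, List.map_cons, List.map_nil, List.sum_append, List.sum_cons,
        List.sum_nil, hχ.map_eq_neg_of_mul_mul_mem hh hy]
      ring
    · refine ⟨u ++ x * h * z :: v, 1, H.one_mem, hu.merge hH hv hh hxz hy, by simp [mul_assoc],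
        fun {M χ} hχ => ?_⟩
      have hχx := hχ.abs_le x
      have hχz := hχ.abs_le z
      have hχy := hχ.abs_le (x * h * z)
      simp only [List.map_append, List.map_cons, List.map_nil, List.sum_append, List.sum_cons,
        List.sum_nil]
      rw [abs_le] at *
      constructor <;> linarith

lemma exists_isReducedSeq (ham : IsAmalgam G₁ G₂ H) (g : G) :
    ∃ w, ∃ h ∈ H, IsReducedSeq G₁ G₂ H w ∧ w.prod * h = g := by
  have hg : g ∈ Subgroup.closure ((G₁ : Set G) ∪ G₂) := ham.2.1 ▸ Subgroup.mem_top g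
  induction hg using Subgroup.closure_induction with
  | mem x hx =>
    by_cases hxH : x ∈ H
    · exact ⟨[], x, hxH, isReducedSeq_nil, by simp⟩
    · exact ⟨[x], 1, H.one_mem, isReducedSeq_singleton.mpr ⟨hx, hxH⟩, by simp⟩
  | one => exact ⟨[], 1, H.one_mem, isReducedSeq_nil, by simp⟩
  | mul x y _ _ ihx ihy =>
    obtain ⟨u, h₁, hh₁, hu, rfl⟩ := ihx
    obtain ⟨v, h₂, hh₂, hv, rfl⟩ := ihy
    obtain ⟨w, h', hh', hw, hprod, -⟩ := hu.exists_mul ham.1 hv hh₁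
    exact ⟨w, h' * h₂, H.mul_mem hh' hh₂, hw, by rw [← mul_assoc, hprod, mul_assoc]⟩
  | inv x _ ih =>
    obtain ⟨u, h, hh, hu, rfl⟩ := ih
    obtain ⟨w, h', hh', hw, hprod, -⟩ :=
      isReducedSeq_nil.exists_mul ham.1 hu.reverse_inv (H.inv_mem hh)
    refine ⟨w, h', hh', hw, ?_⟩
    rw [hprod, List.prod_nil, one_mul, ← List.prod_inv_reverse, mul_inv_rev]

lemma IsReducedSeq.abs_sum_sub_le (ham : IsAmalgam G₁ G₂ H) {M : ℤ} {χ : G → ℤ}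
    (hχ : IsLetterWeight H M χ) {u v : List G} {h h' : G} (hu : IsReducedSeq G₁ G₂ H u)
    (hv : IsReducedSeq G₁ G₂ H v) (hh : h ∈ H) (hh' : h' ∈ H) (heq : u.prod * h = v.prod * h') :
    |(u.map χ).sum - (v.map χ).sum| ≤ 3 * M := by
  obtain ⟨w, h'', hh'', hw, hprod, hbound⟩ :=
    hu.exists_mul ham.1 hv.reverse_inv (H.mul_mem hh (H.inv_mem hh'))
  -- `w` reduces `u.prod * h * (v.prod * h')⁻¹ ∈ H`, so nothing is left
  have hw_nil : w = [] := by
    by_contra hne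
    refine hw.prod_notMem ham hne ?_
    have : w.prod * h'' = 1 := by
      rw [hprod, ← List.prod_inv_reverse, ← mul_assoc, heq]
      group
    exact eq_inv_of_mul_eq_one_left this ▸ H.inv_mem hh''
  have := hbound hχ
  rwa [hw_nil, sum_map_reverse_inv hχ.map_inv, List.map_nil, List.sum_nil, zero_sub,
    sub_neg_eq_add, neg_add_eq_sub, abs_sub_comm] at this

noncomputable def reducedForm (G₁ G₂ H : Subgroup G) (g : G) : List G :=
  Classical.epsilon fun w => IsReducedSeq G₁ G₂ H w ∧ ∃ h ∈ H, w.prod * h = g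

lemma reducedForm_spec (ham : IsAmalgam G₁ G₂ H) (g : G) :
    IsReducedSeq G₁ G₂ H (reducedForm G₁ G₂ H g) ∧
      ∃ h ∈ H, (reducedForm G₁ G₂ H g).prod * h = g := by
  obtain ⟨w, h, hh, hw, hg⟩ := exists_isReducedSeq ham g
  exact Classical.epsilon_spec (p := fun w => IsReducedSeq G₁ G₂ H w ∧ ∃ h ∈ H, w.prod * h = g)
    ⟨w, hw, h, hh, hg⟩

noncomputable def reducedWeight (G₁ G₂ H : Subgroup G) (χ : G → ℤ) (g : G) : ℤ :=
  ((reducedForm G₁ G₂ H g).map χ).sum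

section ReducedWeight

variable {M : ℤ} {χ : G → ℤ}

lemma abs_reducedWeight_sub_le (ham : IsAmalgam G₁ G₂ H) (hχ : IsLetterWeight H M χ)
    {w : List G} {h : G} (hw : IsReducedSeq G₁ G₂ H w) (hh : h ∈ H) :
    |reducedWeight G₁ G₂ H χ (w.prod * h) - (w.map χ).sum| ≤ 3 * M := by
  obtain ⟨hr, h', hh', heq⟩ := reducedForm_spec ham (w.prod * h)
  exact hr.abs_sum_sub_le ham hχ hw hh' hh heq

lemma isQuasimorphism_reducedWeight (ham : IsAmalgam G₁ G₂ H) (hχ : IsLetterWeight H M χ) :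
    IsQuasimorphism (reducedWeight G₁ G₂ H χ) (6 * M) := by
  intro x y
  obtain ⟨hu, h₁, hh₁, hx⟩ := reducedForm_spec ham x
  obtain ⟨hv, h₂, hh₂, hy⟩ := reducedForm_spec ham y
  obtain ⟨w, h', hh', hw, hprod, hbound⟩ := hu.exists_mul ham.1 hv hh₁
  have hxy : w.prod * (h' * h₂) = x * y := by
    rw [← mul_assoc, hprod, mul_assoc _ _ h₂, hy, hx]
  have h1 := abs_reducedWeight_sub_le ham hχ hw (H.mul_mem hh' hh₂)
  have h2 := hbound hχ
  rw [hxy] at h1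
  unfold reducedWeight at *
  rw [abs_le] at *
  constructor <;> linarith

lemma abs_reducedWeight_le_of_mem (ham : IsAmalgam G₁ G₂ H) (hχ : IsLetterWeight H M χ)
    {k : G} (hk : k ∈ G₁ ∨ k ∈ G₂) : |reducedWeight G₁ G₂ H χ k| ≤ 4 * M := by
  by_cases hkH : k ∈ H
  · have := abs_reducedWeight_sub_le ham hχ isReducedSeq_nil hkH
    simp only [List.prod_nil, one_mul, List.map_nil, List.sum_nil, sub_zero] at this
    linarith [hχ.nonneg]
  · have := abs_reducedWeight_sub_le ham hχ (isReducedSeq_singleton.mpr ⟨hk, hkH⟩) H.one_mem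
    have hk := hχ.abs_le k
    simp only [List.prod_singleton, mul_one, List.map_cons, List.map_nil, List.sum_cons,
      List.sum_nil, add_zero] at this
    rw [abs_le] at *
    constructor <;> linarith

def growthWord (a c : G) : ℕ → List G
  | 0 => [a]
  | n + 1 => a :: c :: a :: c⁻¹ :: growthWord a c n

lemma isReducedSeq_growthWord {a c : G} (hac : IsReducedSeq G₁ G₂ H [a, c]) (n : ℕ) :
    IsReducedSeq G₁ G₂ H (growthWord a c n) := by
  obtain ⟨ha, hac, hc⟩ := isReducedSeq_cons_cons.mp hac
  have hc := isReducedSeq_singleton.mp hc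
  have hac' : InDiffFactors G₁ G₂ a c⁻¹ := hac.congr (sameFactors_refl a) (sameFactors_inv c)
  induction n with
  | zero => exact isReducedSeq_singleton.mpr ha
  | succ n ih =>
    obtain ⟨t, ht⟩ : ∃ t, growthWord a c n = a :: t := by cases n <;> exact ⟨_, rfl⟩
    rw [ht] at ih
    rw [growthWord, ht]
    simp only [isReducedSeq_cons_cons]
    exact ⟨ha, hac, hc, hac.symm, ha, hac', hc.inv, hac'.symm, ih⟩

lemma sum_map_growthWord (hχ : ∀ x, χ x⁻¹ = -χ x) (a c : G) (n : ℕ) :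
    ((growthWord a c n).map χ).sum = (2 * n + 1) * χ a := by
  induction n with
  | zero => simp [growthWord]
  | succ n ih =>
    simp only [growthWord, List.map_cons, List.sum_cons, ih, hχ]
    push_cast
    ring

lemma not_bddAbove_range_reducedWeight (ham : IsAmalgam G₁ G₂ H) (hχ : IsLetterWeight H M χ)
    {a c : G} (hac : IsReducedSeq G₁ G₂ H [a, c]) (ha : 0 < χ a) :
    ¬BddAbove (Set.range (reducedWeight G₁ G₂ H χ)) := by
  rintro ⟨B, hB⟩
  obtain ⟨n, hn⟩ := exists_nat_gt (B + 3 * M)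
  have h := abs_reducedWeight_sub_le ham hχ (isReducedSeq_growthWord hac n) H.one_mem
  have hq : reducedWeight G₁ G₂ H χ ((growthWord a c n).prod * 1) ≤ B := hB ⟨_, rfl⟩
  rw [sum_map_growthWord hχ.map_inv, abs_le] at h
  nlinarith

end ReducedWeight

lemma exists_isReducedSeq_pair (hH : G₁ ⊓ G₂ ≤ H) (h₁ : H.relIndex G₁ ≠ 1)
    (h₂ : H.relIndex G₂ ≠ 1) {a : G} (ha : IsLetter G₁ G₂ H a) :
    ∃ c, IsReducedSeq G₁ G₂ H [a, c] := by
  rcases ha.1 with ha₁ | ha₂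
  · obtain ⟨c, hc₂, hcH⟩ := SetLike.not_le_iff_exists.mp (mt Subgroup.relIndex_eq_one.mpr h₂)
    exact ⟨c, isReducedSeq_cons_cons.mpr ⟨ha, inDiffFactors_of_mem hH ha₁ hc₂ ha.2 hcH,
      isReducedSeq_singleton.mpr ⟨.inr hc₂, hcH⟩⟩⟩
  · obtain ⟨c, hc₁, hcH⟩ := SetLike.not_le_iff_exists.mp (mt Subgroup.relIndex_eq_one.mpr h₁)
    exact ⟨c, isReducedSeq_cons_cons.mpr ⟨ha, (inDiffFactors_of_mem hH hc₁ ha₂ hcH ha.2).symm,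
      isReducedSeq_singleton.mpr ⟨.inl hc₁, hcH⟩⟩⟩

lemma mul_mul_mem_dcoset {b x h₁ h₂ : G} (hh₁ : h₁ ∈ H) (hh₂ : h₂ ∈ H)
    (hx : x ∈ DCoset H b) : h₁ * x * h₂ ∈ DCoset H b := by
  obtain ⟨k₁, hk₁, k₂, hk₂, rfl⟩ := DoubleCoset.mem_doubleCoset.mp hx
  exact DoubleCoset.mem_doubleCoset.mpr
    ⟨h₁ * k₁, H.mul_mem hh₁ hk₁, k₂ * h₂, H.mul_mem hk₂ hh₂, by group⟩

lemma mul_mul_mem_dcoset_iff {b x h₁ h₂ : G} (hh₁ : h₁ ∈ H) (hh₂ : h₂ ∈ H) :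
    h₁ * x * h₂ ∈ DCoset H b ↔ x ∈ DCoset H b :=
  ⟨fun h => by simpa [mul_assoc] using mul_mul_mem_dcoset (H.inv_mem hh₁) (H.inv_mem hh₂) h,
    mul_mul_mem_dcoset hh₁ hh₂⟩

lemma inv_mem_dcoset_inv {b x : G} (hx : x ∈ DCoset H b) : x⁻¹ ∈ DCoset H b⁻¹ := by
  obtain ⟨k₁, hk₁, k₂, hk₂, rfl⟩ := DoubleCoset.mem_doubleCoset.mp hx
  exact DoubleCoset.mem_doubleCoset.mpr ⟨k₂⁻¹, H.inv_mem hk₂, k₁⁻¹, H.inv_mem hk₁, by group⟩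

lemma inv_mem_dcoset_iff {b x : G} : x⁻¹ ∈ DCoset H b ↔ x ∈ DCoset H b⁻¹ :=
  ⟨fun h => by simpa using inv_mem_dcoset_inv h, fun h => by simpa using inv_mem_dcoset_inv h⟩

open scoped Classical in
noncomputable def dcosetSign (H : Subgroup G) (a x : G) : ℤ :=
  (if x ∈ DCoset H a then 1 else 0) - (if x ∈ DCoset H a⁻¹ then 1 else 0)

lemma isLetterWeight_dcosetSign (H : Subgroup G) (a : G) : IsLetterWeight H 1 (dcosetSign H a) where
  map_mul_mul x h₁ hh₁ h₂ hh₂ := by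
    rw [dcosetSign, dcosetSign, mul_mul_mem_dcoset_iff hh₁ hh₂, mul_mul_mem_dcoset_iff hh₁ hh₂]
  map_inv x := by
    rw [dcosetSign, dcosetSign, inv_mem_dcoset_iff, inv_mem_dcoset_iff, inv_inv]
    ring
  abs_le x := by unfold dcosetSign; split_ifs <;> norm_num

lemma dcosetSign_self {a : G} (hd : DCoset H a ≠ DCoset H a⁻¹) : dcosetSign H a a = 1 := by
  have ha : a ∈ DCoset H a := DoubleCoset.mem_doubleCoset_self H H a
  have ha' : a ∉ DCoset H a⁻¹ := fun h => hd (DoubleCoset.doubleCoset_eq_of_mem h)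
  simp [dcosetSign, ha, ha']

end Amalgam

/-- If `[G₁ : H] ≥ 3`, `[G₂ : H] ≥ 2` and some `a ∈ G₁ ∪ G₂` satisfies `HaH ≠ Ha⁻¹H`,
then the amalgam `G = G₁ *_H G₂` has infinite width with respect to the conjugation
invariant generating set `S = (G₁)^G ∪ (G₂)^G`; in particular `G` has infinite
`C`-width. (Here `Subgroup.relindex H Gᵢ = 0` encodes an infinite index.) -/
theorem amalgam_infinite_C_width {G : Type*} [Group G] (G₁ G₂ H : Subgroup G)
    (ham : IsAmalgam G₁ G₂ H)
    (h1 : H.relIndex G₁ = 0 ∨ 3 ≤ H.relIndex G₁)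
    (h2 : H.relIndex G₂ = 0 ∨ 2 ≤ H.relIndex G₂)
    (a : G) (ha : a ∈ (G₁ : Set G) ∪ (G₂ : Set G))
    (hd : DCoset H a ≠ DCoset H a⁻¹) :
    ConjInvariant {x : G | ∃ g k : G, (k ∈ G₁ ∨ k ∈ G₂) ∧ x = g⁻¹ * k * g} ∧
    Subgroup.closure {x : G | ∃ g k : G, (k ∈ G₁ ∨ k ∈ G₂) ∧ x = g⁻¹ * k * g} = ⊤ ∧
    ¬ HasFiniteWidth {x : G | ∃ g k : G, (k ∈ G₁ ∨ k ∈ G₂) ∧ x = g⁻¹ * k * g} ∧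
    ¬ FiniteCWidth G := by
  set S := {x : G | ∃ g k : G, (k ∈ G₁ ∨ k ∈ G₂) ∧ x = g⁻¹ * k * g}
  have hconj : ConjInvariant S := conjInvariant_conjugates ((G₁ : Set G) ∪ G₂)
  have hgen : Subgroup.closure S = ⊤ := closure_conjugates_eq_top ham.2.1
  have hχ := isLetterWeight_dcosetSign H a
  have hχa : dcosetSign H a a = 1 := dcosetSign_self hd
  have haH : a ∉ H := fun h => by simp [hχ.map_eq_zero_of_mem h] at hχa
  obtain ⟨c, hac⟩ := exists_isReducedSeq_pair ham.1.ge (by omega) (by omega) ⟨ha, haH⟩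
  have hq := isQuasimorphism_reducedWeight ham hχ
  have hS : ∀ s ∈ S, |reducedWeight G₁ G₂ H (dcosetSign H a) s| ≤ 4 * 1 + 4 * (6 * 1) := by
    rintro _ ⟨g, k, hk, rfl⟩
    exact hq.abs_map_conj_le (abs_reducedWeight_le_of_mem ham hχ hk) g
  have hwidth : ¬HasFiniteWidth S :=
    hq.not_hasFiniteWidth hS (not_bddAbove_range_reducedWeight ham hχ hac (by omega))
  exact ⟨hconj, hgen, hwidth, fun hF => hwidth (hF S hgen hconj)⟩
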